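/- Let r > 0, h ∈ ℝ, c = √(r² + h²), and let L > 2πc. Let γ : [0,L] → ℝ³ be the unit-speed helix γ(s) = (r·cos(s/c), r·sin(s/c), hs/c). Assume every global minimizer of the bending energy B, among curves in W^{2,2}_arc(0,L;ℝ³) with the same clamped boundary data as γ, is of class C²([0,L];ℝ³). Then γ is not a global minimizer of B among curves ξ ∈ W^{2,2}_arc(0,L;ℝ³) satisfying ξ(0) = γ(0), ξ(L) = γ(L), ξ'(0) = γ'(0), ξ'(L) = γ'(L); i.e., a helical elastica with more than one turn is not minimal in the set of clamped curves of fixed length in ℝ³. -/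

import Mathlib

/-!
Cut one full period `[a, a + P]` out of the helix and replace it by the same arc traversed
backwards and point-reflected through the midpoint of its chord. Because the tangent is
`P`-periodic, the new curve is still `C¹`, unit speed, with the same clamped data, and its
curvature has the same constant length almost everywhere, so it has the same bending energy.
If the helix were a global minimizer, so would be the new curve, hence `C²`; but at `s = a` its
curvature vector jumps from `γ''(a)` to `-γ''(a) ≠ 0`.
-/

open MeasureTheory Set Filter RealInnerProductSpace

noncomputable section

/-- Euclidean 3-space. -/
abbrev R3 := EuclideanSpace ℝ (Fin 3)

/-- The point of `ℝ³` with coordinates `(a, b, c)`. -/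
def e3 (a b c : ℝ) : R3 := (WithLp.equiv 2 (Fin 3 → ℝ)).symm ![a, b, c]

/-- `γ` (restricted to `[0,L]`) is an arclength parameterized `W^{2,2}` space curve:
`γ` is `C¹` and unit-speed on `[0,L]`, `γ'` is absolutely continuous (it is recovered from
its a.e. derivative by integration), and the second derivative lies in `L²(0,L)`. -/
structure ArcCurve3 (L : ℝ) (γ : ℝ → R3) : Prop where
  c1 : ContDiffOn ℝ 1 γ (Icc 0 L)
  unit : ∀ s ∈ Icc (0:ℝ) L, ‖deriv γ s‖ = 1
  ac : ∀ a ∈ Icc (0:ℝ) L, ∀ b ∈ Icc (0:ℝ) L,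
    deriv γ b - deriv γ a = ∫ s in a..b, deriv (deriv γ) s
  l2 : MemLp (fun s => deriv (deriv γ) s) 2 (volume.restrict (Icc 0 L))

/-- The bending energy `B(γ) = ∫₀^L |γ''|² ds`. -/
def Ben (L : ℝ) (γ : ℝ → R3) : ℝ := ∫ s in Icc (0:ℝ) L, ‖deriv (deriv γ) s‖ ^ 2

/-- The `W^{2,2}`-distance between two curves on `[0,L]`. -/
def W22Dist (L : ℝ) (γ ξ : ℝ → R3) : ℝ :=
  Real.sqrt (∫ s in Icc (0:ℝ) L, (‖γ s - ξ s‖ ^ 2 + ‖deriv γ s - deriv ξ s‖ ^ 2 +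
    ‖deriv (deriv γ) s - deriv (deriv ξ) s‖ ^ 2))

/-- The admissible class `A_c` with clamped boundary conditions in `ℝ³`. -/
def Adm3 (L : ℝ) (P0 P1 V0 V1 : R3) (γ : ℝ → R3) : Prop :=
  ArcCurve3 L γ ∧ γ 0 = P0 ∧ γ L = P1 ∧ deriv γ 0 = V0 ∧ deriv γ L = V1

/-- Global minimizer of the bending energy in `A_c`. -/
def IsGlobalMin3 (L : ℝ) (P0 P1 V0 V1 : R3) (γ : ℝ → R3) : Prop :=
  Adm3 L P0 P1 V0 V1 γ ∧ ∀ ξ, Adm3 L P0 P1 V0 V1 ξ → Ben L γ ≤ Ben L ξ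

/-- Local minimizer of the bending energy in `A_c` (w.r.t. the `W^{2,2}` topology). -/
def IsLocalMin3 (L : ℝ) (P0 P1 V0 V1 : R3) (γ : ℝ → R3) : Prop :=
  Adm3 L P0 P1 V0 V1 γ ∧
    ∃ δ > 0, ∀ ξ, Adm3 L P0 P1 V0 V1 ξ → W22Dist L γ ξ < δ → Ben L γ ≤ Ben L ξ

open Topology

section Piecewise

variable {𝕜 E : Type*} [NontriviallyNormedField 𝕜] [NormedAddCommGroup E] [NormedSpace 𝕜 E]

lemma hasDerivAt_piecewise_of_notMem_frontier {S : Set 𝕜} [∀ x, Decidable (x ∈ S)]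
    {f g f' g' : 𝕜 → E} {x : 𝕜} (hx : x ∉ frontier S)
    (hf : HasDerivAt f (f' x) x) (hg : HasDerivAt g (g' x) x) :
    HasDerivAt (S.piecewise g f) (S.piecewise g' f' x) x := by
  by_cases hxS : x ∈ S
  · have hS : S ∈ 𝓝 x :=
      mem_interior_iff_mem_nhds.mp ((mem_interior_iff_notMem_frontier hxS).mpr hx)
    rw [piecewise_eq_of_mem _ _ _ hxS]
    exact hg.congr_of_eventuallyEq (eventually_of_mem hS fun t ht => piecewise_eq_of_mem _ _ _ ht)
  · have hS : Sᶜ ∈ 𝓝 x := mem_interior_iff_mem_nhds.mp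
      ((mem_interior_iff_notMem_frontier hxS).mpr (by rwa [frontier_compl]))
    rw [piecewise_eq_of_notMem _ _ _ hxS]
    exact hf.congr_of_eventuallyEq
      (eventually_of_mem hS fun t ht => piecewise_eq_of_notMem _ _ _ ht)

end Piecewise

section Gluing

variable {E : Type*} [NormedAddCommGroup E] [NormedSpace ℝ E]

lemma HasDerivAt.of_nhdsLE_nhdsGE {F f g : ℝ → E} {x : ℝ} {v : E}
    (hf : HasDerivAt f v x) (hg : HasDerivAt g v x)
    (hFf : F =ᶠ[𝓝[≤] x] f) (hFg : F =ᶠ[𝓝[≥] x] g) : HasDerivAt F v x := by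
  have h :=
    (hf.hasDerivWithinAt.congr_of_eventuallyEq hFf (hFf.eq_of_nhdsWithin self_mem_Iic)).union
      (hg.hasDerivWithinAt.congr_of_eventuallyEq hFg (hFg.eq_of_nhdsWithin self_mem_Ici))
  rwa [Iic_union_Ici, hasDerivWithinAt_univ] at h

lemma hasDerivAt_piecewise_Icc {f g f' g' : ℝ → E} {a b : ℝ} (hab : a < b)
    (hf : ∀ x, HasDerivAt f (f' x) x) (hg : ∀ x, HasDerivAt g (g' x) x)
    (ha : f a = g a) (hb : f b = g b) (ha' : f' a = g' a) (hb' : f' b = g' b) (x : ℝ) :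
    HasDerivAt ((Icc a b).piecewise g f) ((Icc a b).piecewise g' f' x) x := by
  rcases eq_or_ne x a with rfl | hxa
  · rw [piecewise_eq_of_mem _ _ _ (left_mem_Icc.2 hab.le)]
    refine (ha' ▸ hf x).of_nhdsLE_nhdsGE (hg x) ?_ ?_
    · filter_upwards [self_mem_nhdsWithin] with t (ht : t ≤ x)
      rcases ht.lt_or_eq with ht | rfl
      · exact piecewise_eq_of_notMem _ _ _ fun h => ht.not_ge h.1
      · rw [piecewise_eq_of_mem _ _ _ (left_mem_Icc.2 hab.le), ha]
    · filter_upwards [Ico_mem_nhdsGE hab] with t ht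
      exact piecewise_eq_of_mem _ _ _ (Ico_subset_Icc_self ht)
  rcases eq_or_ne x b with rfl | hxb
  · rw [piecewise_eq_of_mem _ _ _ (right_mem_Icc.2 hab.le)]
    refine (hg x).of_nhdsLE_nhdsGE (hb' ▸ hf x) ?_ ?_
    · filter_upwards [Ioc_mem_nhdsLE hab] with t ht
      exact piecewise_eq_of_mem _ _ _ (Ioc_subset_Icc_self ht)
    · filter_upwards [self_mem_nhdsWithin] with t (ht : x ≤ t)
      rcases ht.lt_or_eq with ht | rfl
      · exact piecewise_eq_of_notMem _ _ _ fun h => ht.not_ge h.2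
      · rw [piecewise_eq_of_mem _ _ _ (right_mem_Icc.2 hab.le), hb]
  · exact hasDerivAt_piecewise_of_notMem_frontier
      (by simp [frontier_Icc hab.le, hxa, hxb]) (hf x) (hg x)

end Gluing

lemma ContinuousAt.eq_of_eventuallyEq_nhdsLT_nhdsGT {β : Type*} [TopologicalSpace β] [T2Space β]
    {F f g : ℝ → β} {x : ℝ}
    (hF : ContinuousAt F x) (hf : ContinuousAt f x) (hg : ContinuousAt g x)
    (hFf : F =ᶠ[𝓝[<] x] f) (hFg : F =ᶠ[𝓝[>] x] g) : f x = g x :=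
  (tendsto_nhds_unique ((hF.tendsto.mono_left nhdsWithin_le_nhds).congr' hFf)
      (hf.tendsto.mono_left nhdsWithin_le_nhds)).symm.trans
    (tendsto_nhds_unique ((hF.tendsto.mono_left nhdsWithin_le_nhds).congr' hFg)
      (hg.tendsto.mono_left nhdsWithin_le_nhds))

theorem Function.Periodic.deriv {𝕜 E : Type*} [NontriviallyNormedField 𝕜] [NormedAddCommGroup E]
    [NormedSpace 𝕜 E] {f : 𝕜 → E} {c : 𝕜} (h : f.Periodic c) : (deriv f).Periodic c :=
  fun x => by rw [← deriv_comp_add_const, h.funext]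

lemma continuousAt_deriv_deriv_of_contDiffOn {𝕜 E : Type*} [NontriviallyNormedField 𝕜]
    [NormedAddCommGroup E] [NormedSpace 𝕜 E] {f : 𝕜 → E} {s : Set 𝕜} {x : 𝕜}
    (hf : ContDiffOn 𝕜 2 f s) (hs : s ∈ 𝓝 x) : ContinuousAt (deriv (deriv f)) x :=
  (((hf.mono interior_subset).deriv_of_isOpen isOpen_interior (m := 1) (by norm_num)
    ).continuousOn_deriv_of_isOpen isOpen_interior le_rfl).continuousAt
    (isOpen_interior.mem_nhds (mem_interior_iff_mem_nhds.mpr hs))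

def reverseIcc {α : Type*} (u : ℝ → α) (a b : ℝ) : ℝ → α :=
  (Icc a b).piecewise (fun s => u (a + b - s)) u

lemma continuous_reverseIcc {α : Type*} [TopologicalSpace α] {u : ℝ → α} {a b : ℝ}
    (hu : Continuous u) (hab : a ≤ b) (huab : u a = u b) :
    Continuous (reverseIcc u a b) :=
  Continuous.piecewise (fun x hx => by
    rw [frontier_Icc hab] at hx
    rcases hx with rfl | rfl <;> simp [huab]) (by fun_prop) hu

section ReflectArc

variable {E : Type*} [NormedAddCommGroup E] [NormedSpace ℝ E] {γ : ℝ → E} {a b : ℝ}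

def reflectArc (γ : ℝ → E) (a b : ℝ) : ℝ → E :=
  (Icc a b).piecewise (fun s => γ a + γ b - γ (a + b - s)) γ

lemma hasDerivAt_reflectArc (hγ : Differentiable ℝ γ) (hab : a < b)
    (hγab : deriv γ a = deriv γ b) (s : ℝ) :
    HasDerivAt (reflectArc γ a b) (reverseIcc (deriv γ) a b s) s :=
  hasDerivAt_piecewise_Icc hab (fun s => (hγ s).hasDerivAt)
    (fun s => by simpa using ((hγ _).hasDerivAt.comp_const_sub (a + b) s).const_sub (γ a + γ b))
    (by simp) (by simp) (by simpa) (by simpa using hγab.symm) s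

lemma deriv_reflectArc (hγ : Differentiable ℝ γ) (hab : a < b)
    (hγab : deriv γ a = deriv γ b) : deriv (reflectArc γ a b) = reverseIcc (deriv γ) a b :=
  funext fun s => (hasDerivAt_reflectArc hγ hab hγab s).deriv

lemma hasDerivAt_reverseIcc {u : ℝ → E} (hu : Differentiable ℝ u) (hab : a ≤ b) {s : ℝ}
    (hsa : s ≠ a) (hsb : s ≠ b) :
    HasDerivAt (reverseIcc u a b)
      ((Icc a b).piecewise (fun t => -deriv u (a + b - t)) (deriv u) s) s :=
  hasDerivAt_piecewise_of_notMem_frontier (by simp [frontier_Icc hab, hsa, hsb])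
    (hu s).hasDerivAt ((hu _).hasDerivAt.comp_const_sub (a + b) s)

lemma norm_deriv_deriv_reflectArc (hγ : Differentiable ℝ γ) (hu : Differentiable ℝ (deriv γ))
    (hab : a < b) (hγab : deriv γ a = deriv γ b) {κ : ℝ} (hκ : ∀ s, ‖deriv (deriv γ) s‖ = κ)
    {s : ℝ} (hsa : s ≠ a) (hsb : s ≠ b) : ‖deriv (deriv (reflectArc γ a b)) s‖ = κ := by
  rw [deriv_reflectArc hγ hab hγab, (hasDerivAt_reverseIcc hu hab.le hsa hsb).deriv]
  by_cases hs : s ∈ Icc a b <;> simp [Set.piecewise, hs, hκ]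

lemma not_continuousAt_deriv_deriv_reflectArc (hγ : Differentiable ℝ γ)
    (hu : Differentiable ℝ (deriv γ)) (hab : a < b) (hγab : deriv γ a = deriv γ b)
    (hw : Continuous (deriv (deriv γ)))
    (hwab : deriv (deriv γ) a ≠ -deriv (deriv γ) b) :
    ¬ ContinuousAt (deriv (deriv (reflectArc γ a b))) a := by
  intro hcont
  suffices h : deriv (deriv γ) a = -deriv (deriv γ) (a + b - a) from hwab (by simpa using h)
  refine hcont.eq_of_eventuallyEq_nhdsLT_nhdsGT (g := fun t => -deriv (deriv γ) (a + b - t))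
    hw.continuousAt (by fun_prop) ?_ ?_
  · filter_upwards [self_mem_nhdsWithin] with t (ht : t < a)
    rw [deriv_reflectArc hγ hab hγab,
      (hasDerivAt_reverseIcc hu hab.le ht.ne (ht.trans hab).ne).deriv,
      piecewise_eq_of_notMem _ _ _ fun h => ht.not_ge h.1]
  · filter_upwards [Ioo_mem_nhdsGT hab] with t ht
    rw [deriv_reflectArc hγ hab hγab, (hasDerivAt_reverseIcc hu hab.le ht.1.ne' ht.2.ne).deriv,
      piecewise_eq_of_mem _ _ _ (Ioo_subset_Icc_self ht)]

end ReflectArc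

lemma ArcCurve3.of_differentiableAt_off_countable {L C : ℝ} {ξ : ℝ → R3} {S : Set ℝ}
    (hS : S.Countable)
    (hξ : Differentiable ℝ ξ) (hcont : Continuous (deriv ξ)) (hunit : ∀ s, ‖deriv ξ s‖ = 1)
    (hdiff : ∀ s ∉ S, DifferentiableAt ℝ (deriv ξ) s)
    (hbd : ∀ s ∉ S, ‖deriv (deriv ξ) s‖ ≤ C) : ArcCurve3 L ξ := by
  have hbd_ae : ∀ᵐ s, ‖deriv (deriv ξ) s‖ ≤ C := (hS.ae_notMem volume).mono hbd
  have hmeas : Measurable (deriv (deriv ξ)) := measurable_deriv _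
  refine ⟨(contDiff_one_iff_deriv.mpr ⟨hξ, hcont⟩).contDiffOn, fun s _ => hunit s,
    fun a _ b _ => ?_, MemLp.of_bound hmeas.aestronglyMeasurable C (ae_restrict_of_ae hbd_ae)⟩
  exact (integral_eq_of_hasDerivAt_off_countable _ _ hS hcont.continuousOn
    (fun s hs => (hdiff s hs.2).hasDerivAt)
    (intervalIntegrable_const.mono_fun' hmeas.aestronglyMeasurable
      (ae_restrict_of_ae hbd_ae))).symm

lemma ben_congr_ae {L : ℝ} {ξ γ : ℝ → R3}
    (h : ∀ᵐ s, ‖deriv (deriv ξ) s‖ = ‖deriv (deriv γ) s‖) : Ben L ξ = Ben L γ :=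
  integral_congr_ae (ae_restrict_of_ae (h.mono fun s hs => by simp only [hs]))

section ReflectArcR3

variable {γ : ℝ → R3} {a b κ : ℝ}

lemma ben_reflectArc (hγ : Differentiable ℝ γ) (hu : Differentiable ℝ (deriv γ))
    (hκ : ∀ s, ‖deriv (deriv γ) s‖ = κ) (hab : a < b) (hγab : deriv γ a = deriv γ b) {L : ℝ} :
    Ben L (reflectArc γ a b) = Ben L γ :=
  ben_congr_ae ((((countable_singleton b).insert a).ae_notMem volume).mono fun s hs => by
    simp only [mem_insert_iff, mem_singleton_iff, not_or] at hs
    rw [norm_deriv_deriv_reflectArc hγ hu hab hγab hκ hs.1 hs.2, hκ])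

lemma adm3_reflectArc (hγ : Differentiable ℝ γ) (hu : Differentiable ℝ (deriv γ))
    (hκ : ∀ s, ‖deriv (deriv γ) s‖ = κ) (hab : a < b) (hγab : deriv γ a = deriv γ b) {L : ℝ}
    (hunit : ∀ s, ‖deriv γ s‖ = 1) (ha : 0 < a) (hbL : b < L) :
    Adm3 L (γ 0) (γ L) (deriv γ 0) (deriv γ L) (reflectArc γ a b) := by
  have hξ' := deriv_reflectArc hγ hab hγab
  have h0 : (0 : ℝ) ∉ Icc a b := fun h => ha.not_ge h.1
  have hL : L ∉ Icc a b := fun h => hbL.not_ge h.2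
  refine ⟨ArcCurve3.of_differentiableAt_off_countable (C := κ)
    ((countable_singleton b).insert a)
    (fun s => (hasDerivAt_reflectArc hγ hab hγab s).differentiableAt)
    (hξ' ▸ continuous_reverseIcc hu.continuous hab.le hγab) (fun s => ?_) (fun s hs => ?_)
    (fun s hs => ?_), piecewise_eq_of_notMem _ _ _ h0, piecewise_eq_of_notMem _ _ _ hL, ?_, ?_⟩
  · rw [hξ']
    by_cases hs : s ∈ Icc a b <;> simp [reverseIcc, Set.piecewise, hs, hunit]
  · simp only [mem_insert_iff, mem_singleton_iff, not_or] at hs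
    exact hξ' ▸ (hasDerivAt_reverseIcc hu hab.le hs.1 hs.2).differentiableAt
  · simp only [mem_insert_iff, mem_singleton_iff, not_or] at hs
    exact (norm_deriv_deriv_reflectArc hγ hu hab hγab hκ hs.1 hs.2).le
  · rw [hξ']; exact piecewise_eq_of_notMem _ _ _ h0
  · rw [hξ']; exact piecewise_eq_of_notMem _ _ _ hL

end ReflectArcR3

theorem not_isGlobalMin3_of_periodic_tangent {γ : ℝ → R3} {L P κ : ℝ} (hγ : ContDiff ℝ 2 γ)
    (hunit : ∀ s, ‖deriv γ s‖ = 1) (hκ : ∀ s, ‖deriv (deriv γ) s‖ = κ) (hκ0 : κ ≠ 0)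
    (hper : (deriv γ).Periodic P) (hP : 0 < P) (hPL : P < L)
    (H : ∀ ξ, IsGlobalMin3 L (γ 0) (γ L) (deriv γ 0) (deriv γ L) ξ →
      ContDiffOn ℝ 2 ξ (Icc 0 L)) :
    ¬ IsGlobalMin3 L (γ 0) (γ L) (deriv γ 0) (deriv γ L) γ := by
  intro hmin
  have hd : Differentiable ℝ γ := hγ.differentiable (by norm_num)
  have hu : ContDiff ℝ 1 (deriv γ) := hγ.iterate_deriv' 1 1
  obtain ⟨a, ha, haL⟩ : ∃ a, 0 < a ∧ a + P < L := ⟨(L - P) / 2, by linarith, by linarith⟩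
  have hab : a < a + P := by linarith
  have hγab : deriv γ a = deriv γ (a + P) := (hper a).symm
  have hud := hu.differentiable one_ne_zero
  have hξmin : IsGlobalMin3 L (γ 0) (γ L) (deriv γ 0) (deriv γ L) (reflectArc γ a (a + P)) :=
    ⟨adm3_reflectArc hd hud hκ hab hγab hunit ha haL, fun ζ hζ =>
      (ben_reflectArc hd hud hκ hab hγab).symm ▸ hmin.2 ζ hζ⟩
  refine not_continuousAt_deriv_deriv_reflectArc hd hud hab hγab (hu.continuous_deriv le_rfl)
    (fun h => hκ0 ?_) (continuousAt_deriv_deriv_of_contDiffOn (H _ hξmin)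
      (Icc_mem_nhds ha (by linarith)))
  rw [hper.deriv a, eq_neg_iff_add_eq_zero, ← two_smul ℝ, smul_eq_zero,
    or_iff_right two_ne_zero] at h
  rw [← hκ a, h, norm_zero]

lemma norm_e3 (x y z : ℝ) : ‖e3 x y z‖ = Real.sqrt (x ^ 2 + y ^ 2 + z ^ 2) := by
  simp [EuclideanSpace.norm_eq, e3, Fin.sum_univ_three]

lemma hasDerivAt_e3 {f g k : ℝ → ℝ} {f' g' k' t : ℝ} (hf : HasDerivAt f f' t)
    (hg : HasDerivAt g g' t) (hk : HasDerivAt k k' t) :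
    HasDerivAt (fun s => e3 (f s) (g s) (k s)) (e3 f' g' k') t := by
  have hF : HasDerivAt (fun s => ![f s, g s, k s]) ![f', g', k'] t := by
    rw [hasDerivAt_pi]
    intro i
    fin_cases i <;> assumption
  exact (EuclideanSpace.equiv (Fin 3) ℝ).symm.hasFDerivAt.comp_hasDerivAt t hF

lemma ContDiff.e3 {n : WithTop ℕ∞} {f g k : ℝ → ℝ} (hf : ContDiff ℝ n f) (hg : ContDiff ℝ n g)
    (hk : ContDiff ℝ n k) : ContDiff ℝ n fun s => e3 (f s) (g s) (k s) := by
  have hF : ContDiff ℝ n fun s => ![f s, g s, k s] := by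
    rw [contDiff_pi]
    intro i
    fin_cases i <;> assumption
  exact (EuclideanSpace.equiv (Fin 3) ℝ).symm.contDiff.comp hF

section Helix

open Real

variable (r h c : ℝ)

def helix (s : ℝ) : R3 := e3 (r * cos (s / c)) (r * sin (s / c)) (h * s / c)

lemma contDiff_helix {n : WithTop ℕ∞} : ContDiff ℝ n (helix r h c) :=
  ContDiff.e3 (by fun_prop) (by fun_prop) (by fun_prop)

lemma deriv_helix :
    deriv (helix r h c) = fun s => e3 (-(r / c) * sin (s / c)) (r / c * cos (s / c)) (h / c) := by
  refine funext fun s => (hasDerivAt_e3 ?_ ?_ ?_).deriv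
  · exact (((hasDerivAt_id s).div_const c).cos.const_mul r).congr_deriv (by simp; ring)
  · exact (((hasDerivAt_id s).div_const c).sin.const_mul r).congr_deriv (by simp; ring)
  · exact (((hasDerivAt_id s).const_mul h).div_const c).congr_deriv (by simp)

lemma deriv_deriv_helix : deriv (deriv (helix r h c)) =
    fun s => e3 (-(r / c ^ 2) * cos (s / c)) (-(r / c ^ 2) * sin (s / c)) 0 := by
  rw [deriv_helix]
  refine funext fun s => (hasDerivAt_e3 ?_ ?_ (hasDerivAt_const s _)).deriv
  · exact (((hasDerivAt_id s).div_const c).sin.const_mul (-(r / c))).congr_deriv (by simp; ring)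
  · exact (((hasDerivAt_id s).div_const c).cos.const_mul (r / c)).congr_deriv (by simp; ring)

variable {r h c}

lemma norm_deriv_helix (hc : c ^ 2 = r ^ 2 + h ^ 2) (hc0 : c ≠ 0) (s : ℝ) :
    ‖deriv (helix r h c) s‖ = 1 := by
  rw [deriv_helix, norm_e3, Real.sqrt_eq_one]
  field_simp
  linear_combination r ^ 2 * sin_sq_add_cos_sq (s / c) - hc

lemma norm_deriv_deriv_helix (s : ℝ) : ‖deriv (deriv (helix r h c)) s‖ = |r| / c ^ 2 := by
  have hsq : (-(r / c ^ 2) * cos (s / c)) ^ 2 + (-(r / c ^ 2) * sin (s / c)) ^ 2 + 0 ^ 2 =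
      (r / c ^ 2) ^ 2 := by
    linear_combination (r / c ^ 2) ^ 2 * sin_sq_add_cos_sq (s / c)
  rw [deriv_deriv_helix, norm_e3, hsq, Real.sqrt_sq_eq_abs, abs_div, abs_of_nonneg (sq_nonneg c)]

lemma periodic_deriv_helix (hc0 : c ≠ 0) : (deriv (helix r h c)).Periodic (2 * π * c) := by
  intro s
  simp only [deriv_helix, add_div, mul_div_cancel_right₀ _ hc0, sin_add_two_pi, cos_add_two_pi]

end Helix

/-- non-minimality of helices with more than one turn. -/
theorem helix_not_minimal (r h c L : ℝ) (hr : 0 < r)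
    (hc : c = Real.sqrt (r ^ 2 + h ^ 2)) (hL : 2 * Real.pi * c < L)
    (γ : ℝ → R3)
    (hγdef : ∀ s, γ s = e3 (r * Real.cos (s / c)) (r * Real.sin (s / c)) (h * s / c))
    (H : ∀ ξ, IsGlobalMin3 L (γ 0) (γ L) (deriv γ 0) (deriv γ L) ξ →
      ContDiffOn ℝ 2 ξ (Icc 0 L)) :
    ¬ IsGlobalMin3 L (γ 0) (γ L) (deriv γ 0) (deriv γ L) γ := by
  have hc0 : 0 < c := hc ▸ Real.sqrt_pos.mpr (by positivity)
  have hc2 : c ^ 2 = r ^ 2 + h ^ 2 := by rw [hc, Real.sq_sqrt (by positivity)]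
  obtain rfl : γ = helix r h c := funext hγdef
  exact not_isGlobalMin3_of_periodic_tangent (contDiff_helix r h c)
    (norm_deriv_helix hc2 hc0.ne') norm_deriv_deriv_helix (by positivity)
    (periodic_deriv_helix hc0.ne') (by positivity) hL H
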